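/- arXiv:2012.11128 — 2 statements merged into one kernel-verified Lean document; each statement's English description precedes it below -/
import Mathlib

section
/- Let G be a directed graph, s, t vertices and k ∈ ℕ. Let V_{k-1} = {u : sd(s,u) ≤ k−1 and sd(u,t) ≤ k−1 and sd(s,u)+sd(u,t) ≤ k} ∪ {s,t}. Then the subgraph induced by V_{k-1} contains every simple s-t path of G of length at most k. (In other words, (k−1)-hop bidirectional BFS suffices for the preprocessing.) -/
variable {V : Type*}

/-- `p` is a (nonempty) directed path/walk from `s` to `t` in the graph with edge
relation `E`: consecutive vertices are joined by edges, it starts at `s` and ends at `t`. -/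
def IsPath (E : V → V → Prop) (s t : V) (p : List V) : Prop :=
  p.Chain' E ∧ p.head? = some s ∧ p.getLast? = some t

/-- A simple path: a path with no repeated vertices. -/
def IsSimplePath (E : V → V → Prop) (s t : V) (p : List V) : Prop :=
  IsPath E s t p ∧ p.Nodup

/-- The length (number of edges) of a path given as a vertex list. -/
def len (p : List V) : ℕ := p.length - 1

/-- Directed shortest-path distance (number of edges), `⊤` if unreachable. -/
noncomputable def sd (E : V → V → Prop) (u v : V) : ℕ∞ :=
  sInf {n : ℕ∞ | ∃ p : List V, IsPath E u v p ∧ (len p : ℕ∞) = n}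

/-! A vertex `v` of an `s`-`t` path splits it as `l ++ v :: r`; the two pieces are paths
of lengths `|l|` and `|r|`, with `|l| + |r|` the length of the whole path. For `v ≠ s, t` both
pieces are nonempty, so each is at most `k - 1`. -/

lemma len_append_cons (l r : List V) (v : V) : len (l ++ v :: r) = l.length + r.length := by
  simp [len]

section

variable {E : V → V → Prop} {s t v : V} {l r : List V}

lemma sd_le_len {q : List V} (h : IsPath E s t q) : sd E s t ≤ (len q : ℕ∞) :=
  sInf_le ⟨q, h, rfl⟩

lemma IsPath.split (h : IsPath E s t (l ++ v :: r)) :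
    IsPath E s v (l ++ [v]) ∧ IsPath E v t (v :: r) := by
  obtain ⟨hchain, hhead, hlast⟩ := h
  refine ⟨⟨hchain.infix ⟨[], r, by simp⟩, ?_, by simp⟩, hchain.suffix ⟨l, rfl⟩, rfl, ?_⟩
  · cases l <;> simpa using hhead
  · rwa [List.getLast?_append_of_ne_nil l (List.cons_ne_nil v r)] at hlast

lemma IsPath.sd_le_lengths (h : IsPath E s t (l ++ v :: r)) :
    sd E s v ≤ l.length ∧ sd E v t ≤ r.length := by
  obtain ⟨hl, hr⟩ := h.split
  exact ⟨by simpa [len] using sd_le_len hl, by simpa [len] using sd_le_len hr⟩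

end

theorem k_minus_one_hop_bfs_suffices_general (E : V → V → Prop) (s t : V) (k : ℕ)
    (p : List V)
    (hp : IsSimplePath E s t p) (hlen : len p ≤ k) :
    ∀ v ∈ p,
      (sd E s v ≤ ((k - 1 : ℕ) : ℕ∞) ∧ sd E v t ≤ ((k - 1 : ℕ) : ℕ∞) ∧
        sd E s v + sd E v t ≤ (k : ℕ∞)) ∨ v = s ∨ v = t := by
  intro v hv
  obtain ⟨l, r, rfl⟩ := List.append_of_mem hv
  have hpath := hp.1
  obtain rfl | hl := eq_or_ne l []
  · exact .inr (.inl (by simpa [eq_comm] using hpath.2.1))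
  obtain rfl | hr := eq_or_ne r []
  · exact .inr (.inr (by simpa [eq_comm] using hpath.2.2))
  obtain ⟨hsv, hvt⟩ := hpath.sd_le_lengths
  have hl1 : 1 ≤ l.length := List.length_pos_iff.mpr hl
  have hr1 : 1 ≤ r.length := List.length_pos_iff.mpr hr
  rw [len_append_cons] at hlen
  refine .inl ⟨hsv.trans (Nat.cast_le.mpr (by omega)), hvt.trans (Nat.cast_le.mpr (by omega)), ?_⟩
  calc sd E s v + sd E v t ≤ (l.length : ℕ∞) + r.length := add_le_add hsv hvt
    _ ≤ k := by exact_mod_cast hlen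

/-- the vertex set obtained by a `(k-1)`-hop bidirectional BFS (together
with `s` and `t`) contains every vertex of every simple `s`-`t` path of length at
most `k`; hence the induced subgraph contains every such path. -/
theorem k_minus_one_hop_bfs_suffices (E : V → V → Prop) (s t : V) (k : ℕ)
    (hst : sd E s t ≤ (k : ℕ∞)) (p : List V)
    (hp : IsSimplePath E s t p) (hlen : len p ≤ k) :
    ∀ v ∈ p,
      (sd E s v ≤ ((k - 1 : ℕ) : ℕ∞) ∧ sd E v t ≤ ((k - 1 : ℕ) : ℕ∞) ∧
        sd E s v + sd E v t ≤ (k : ℕ∞)) ∨ v = s ∨ v = t :=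
  k_minus_one_hop_bfs_suffices_general E s t k p hp hlen
end

section
/- The expansion-and-verification BFS algorithm enumerates exactly the simple s-t paths of length at most k: starting from the singleton path (s), repeatedly extending every intermediate path p by each out-neighbor u of its endpoint such that u = t (output p·u), or u ∉ p and len(p) + 1 + sd(u,t) ≤ k (keep p·u as intermediate), outputs each simple s-t path of length at most k exactly once, and terminates after at most k rounds. -/
/-!
A kept path is a simple path from `s` avoiding `t`, so every output is a simple `s`-`t` path,
and the barrier `len p + 1 + sd(u,t) ≤ k` together with `sd(u,t) ≥ 1` bounds its length.
Conversely, every proper nonempty prefix `p ++ [u]` of a simple `s`-`t` path `q` with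
`len q ≤ k` passes the barrier, because the rest of `q` is a path from `u` to `t`; so,
prefix by prefix, all of them are kept and `q` is output.
-/

variable {V : Type*}

/-- Intermediate paths kept by the expansion-and-verification BFS: start from the
singleton path `[s]`; extend a kept path by a successor `u` when `u ≠ t`, `u` is
unvisited, and the barrier check `len p + 1 + sd(u,t) ≤ k` passes. -/
inductive Kept (E : V → V → Prop) (s t : V) (k : ℕ) : List V → Prop
  | init : Kept E s t k [s]
  | step {p : List V} {v u : V} :
      Kept E s t k p → p.getLast? = some v → E v u → u ≠ t → u ∉ p →
      (len p : ℕ∞) + 1 + sd E u t ≤ (k : ℕ∞) → Kept E s t k (p ++ [u])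

/-- A path output by the algorithm: a kept path extended by an edge to `t`. -/
def Output (E : V → V → Prop) (s t : V) (k : ℕ) (q : List V) : Prop :=
  ∃ (p : List V) (v : V), Kept E s t k p ∧ p.getLast? = some v ∧ E v t ∧ q = p ++ [t]

variable {E : V → V → Prop} {s t u v : V} {p q r : List V} {k : ℕ}

theorem isPath_iff : IsPath E s t p ↔ p.IsChain E ∧ p.head? = some s ∧ p.getLast? = some t :=
  Iff.rfl

theorem len_concat_le (p : List V) (u : V) : len (p ++ [u]) ≤ len p + 1 := by
  simp only [len, List.length_append, List.length_singleton]
  omega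

namespace IsPath

theorem concat (h : IsPath E s v p) (he : E v u) : IsPath E s u (p ++ [u]) := by
  obtain ⟨hc, hs, hv⟩ := isPath_iff.mp h
  have hp : p ≠ [] := by rintro rfl; simp at hs
  refine isPath_iff.mpr ⟨hc.append (List.isChain_singleton u) ?_, ?_, by simp⟩
  · simp_all
  · rwa [List.head?_append_of_ne_nil _ hp]

theorem of_append_cons (h : IsPath E s t (p ++ u :: r)) : IsPath E u t (u :: r) := by
  obtain ⟨hc, -, ht⟩ := isPath_iff.mp h
  exact isPath_iff.mpr ⟨hc.right_of_append, rfl, by rwa [List.getLast?_append_cons] at ht⟩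

theorem len_pos (h : IsPath E u v p) (huv : u ≠ v) : 0 < len p := by
  obtain ⟨-, hu, hv⟩ := isPath_iff.mp h
  match p, hu, hv with
  | [a], hu, hv => simp_all
  | _ :: _ :: _, _, _ => simp [len]

end IsPath

theorem sd_le_len_s12 (h : IsPath E u v p) : sd E u v ≤ len p :=
  sInf_le ⟨p, h, rfl⟩

theorem one_le_sd (huv : u ≠ v) : 1 ≤ sd E u v := by
  refine le_sInf ?_
  rintro _ ⟨p, hp, rfl⟩
  exact_mod_cast hp.len_pos huv

namespace IsSimplePath

theorem concat (h : IsSimplePath E s v p) (he : E v u) (hu : u ∉ p) :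
    IsSimplePath E s u (p ++ [u]) :=
  ⟨h.1.concat he, h.2.append (List.nodup_singleton u) (by simpa using hu)⟩

theorem ne_of_len_pos (h : IsSimplePath E u v p) (hp : 0 < len p) : u ≠ v := by
  obtain ⟨⟨-, hu, hv⟩, hnd⟩ := h
  match p, hu, hv, hnd, hp with
  | _ :: _ :: _, hu, hv, hnd, _ =>
    simp only [List.head?_cons, Option.some.injEq] at hu
    subst hu
    rintro rfl
    rw [List.getLast?_cons_cons] at hv
    exact (List.nodup_cons.mp hnd).1 (List.mem_of_getLast? hv)

end IsSimplePath

namespace Kept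

theorem isSimplePath (hp : Kept E s t k p) (hv : p.getLast? = some v) :
    IsSimplePath E s v p := by
  induction hp generalizing v with
  | init =>
    obtain rfl : s = v := by simpa using hv
    exact ⟨isPath_iff.mpr ⟨List.isChain_singleton s, rfl, rfl⟩, List.nodup_singleton s⟩
  | step _ hlast he _ hup _ ih =>
    obtain rfl : _ = v := by simpa using hv
    exact (ih hlast).concat he hup

theorem not_mem (hts : t ≠ s) (hp : Kept E s t k p) : t ∉ p := by
  induction hp with
  | init => simpa using hts
  | step _ _ _ hut _ _ ih => simpa [ih] using hut.symm

theorem len_add_one_le (hk : 1 ≤ k) (hp : Kept E s t k p) : len p + 1 ≤ k := by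
  induction hp with
  | init => simpa [len] using hk
  | @step p _ u _ _ _ hut _ hbar _ =>
    have hsd : (len p : ℕ∞) + 1 + 1 ≤ k :=
      le_trans (add_le_add_right (one_le_sd hut) _) hbar
    have : len p + 2 ≤ k := by exact_mod_cast hsd
    have := len_concat_le p u
    omega

theorem of_append_cons (hq : IsSimplePath E s t (p ++ u :: r)) (hlen : len (p ++ u :: r) ≤ k)
    (hp : p ≠ []) : Kept E s t k p := by
  induction p using List.reverseRecOn generalizing u r with
  | nil => exact absurd rfl hp
  | append_singleton p w ih =>
    rw [List.append_assoc, List.singleton_append] at hq hlen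
    rcases eq_or_ne p [] with rfl | hp'
    · obtain rfl : w = s := by simpa using hq.1.2.1
      exact init
    have hsuffix : IsSimplePath E w t (w :: u :: r) :=
      ⟨hq.1.of_append_cons, hq.2.of_append_right⟩
    have hbar : (len p : ℕ∞) + 1 + sd E w t ≤ k := by
      have hsd := sd_le_len_s12 hsuffix.1
      have : len p + 1 + len (w :: u :: r) ≤ k := by
        simp only [len, List.length_append, List.length_cons] at hlen ⊢
        have := List.length_pos_iff.mpr hp'
        omega
      calc (len p : ℕ∞) + 1 + sd E w t ≤ len p + 1 + len (w :: u :: r) := by gcongr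
        _ ≤ k := by exact_mod_cast this
    refine step (ih hq hlen hp') (List.getLast?_eq_some_getLast hp') ?_
      (hsuffix.ne_of_len_pos (by simp [len])) ?_ hbar
    · exact (isPath_iff.mp hq.1).1.rel_getLast_head_of_append hp' (List.cons_ne_nil _ _)
    · exact fun hw => (List.nodup_cons.mp (List.nodup_middle.mp hq.2)).1 (by simp [hw])

end Kept

namespace Output

theorem isSimplePath (hts : t ≠ s) (hq : Output E s t k q) :
    IsSimplePath E s t q := by
  obtain ⟨p, v, hp, hv, he, rfl⟩ := hq
  exact (hp.isSimplePath hv).concat he (hp.not_mem hts)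

theorem len_le (hk : 1 ≤ k) (hq : Output E s t k q) : len q ≤ k := by
  obtain ⟨p, -, hp, -, -, rfl⟩ := hq
  exact (len_concat_le p t).trans (hp.len_add_one_le hk)

theorem of_isSimplePath (hts : t ≠ s) (hq : IsSimplePath E s t q)
    (hlen : len q ≤ k) : Output E s t k q := by
  obtain ⟨hc, hs, ht⟩ := isPath_iff.mp hq.1
  obtain ⟨p, rfl⟩ := List.getLast?_eq_some_iff.mp ht
  have hp : p ≠ [] := by
    rintro rfl
    exact hts (by simpa using hs)
  exact ⟨p, p.getLast hp, Kept.of_append_cons hq hlen hp, List.getLast?_eq_some_getLast hp,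
    hc.rel_getLast_head_of_append hp (List.cons_ne_nil _ _), rfl⟩

theorem existsUnique_kept (hq : Output E s t k q) :
    ∃! p : List V, Kept E s t k p ∧ q = p ++ [t] := by
  obtain ⟨p, -, hp, -, -, rfl⟩ := hq
  exact ⟨p, ⟨hp, rfl⟩, fun p' ⟨_, h⟩ => List.append_cancel_right h.symm⟩

end Output

/-- the expansion-and-verification BFS outputs exactly the simple
`s`-`t` paths of length at most `k`, each exactly once, and every kept intermediate
path has length at most `k - 1` (so it terminates after at most `k` rounds). -/
theorem expansion_verification_correct (E : V → V → Prop) (s t : V) (k : ℕ)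
    (hts : t ≠ s) (hk : 1 ≤ k) :
    (∀ q : List V, Output E s t k q ↔ (IsSimplePath E s t q ∧ len q ≤ k)) ∧
    (∀ q : List V, Output E s t k q → ∃! p : List V, Kept E s t k p ∧ q = p ++ [t]) ∧
    (∀ p : List V, Kept E s t k p → len p ≤ k - 1) :=
  ⟨fun _ => ⟨fun hq => ⟨hq.isSimplePath hts, hq.len_le hk⟩,
      fun ⟨hq, hlen⟩ => Output.of_isSimplePath hts hq hlen⟩,
    fun _ => Output.existsUnique_kept,
    fun _ hp => Nat.le_sub_of_add_le (hp.len_add_one_le hk)⟩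
end
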